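/- For every n ≥ 1 one has in ℂ[X] the identity X^n − 1 = ∏_{d ∣∣ n} Φ_d^*(X), where the product runs over the unitary divisors d of n. -/
import Mathlib


open Complex Polynomial Finset

/-- The unitary gcd `(j,n)_*`: the largest `d` with `d ∣ j`, `d ∣ n` and `gcd(d, n/d) = 1`. -/
def ugcd (j n : ℕ) : ℕ :=
  Nat.findGreatest (fun d => d ∣ j ∧ d ∣ n ∧ Nat.gcd d (n / d) = 1) n

/-- The unitary cyclotomic polynomial `Φ_n^*(X) = ∏_{1 ≤ j ≤ n, (j,n)_* = 1} (X − ζ_n^j)`. -/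
noncomputable def unitaryCyc (n : ℕ) : Polynomial ℂ :=
  ∏ j ∈ (Finset.Icc 1 n).filter (fun j => ugcd j n = 1),
    (X - C (Complex.exp (2 * Real.pi * Complex.I / n) ^ j))

lemma ugcd_spec {j n : ℕ} (hn : 1 ≤ n) :
    ugcd j n ∣ j ∧ ugcd j n ∣ n ∧ Nat.gcd (ugcd j n) (n / ugcd j n) = 1 :=
  Nat.findGreatest_spec (P := fun d => d ∣ j ∧ d ∣ n ∧ Nat.gcd d (n / d) = 1) hn
    ⟨one_dvd _, one_dvd _, by simp⟩

lemma ugcd_pos {j n : ℕ} (hn : 1 ≤ n) : 1 ≤ ugcd j n :=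
  Nat.le_findGreatest (P := fun d => d ∣ j ∧ d ∣ n ∧ Nat.gcd d (n / d) = 1) hn
    ⟨one_dvd _, one_dvd _, by simp⟩

lemma le_ugcd {j n d : ℕ} (hn : 0 < n) (h1 : d ∣ j) (h2 : d ∣ n)
    (h3 : Nat.gcd d (n / d) = 1) : d ≤ ugcd j n :=
  Nat.le_findGreatest (P := fun e => e ∣ j ∧ e ∣ n ∧ Nat.gcd e (n / e) = 1)
    (Nat.le_of_dvd hn h2) ⟨h1, h2, h3⟩

/-- Key lemma: if `d` is a unitary divisor of `n` and `ugcd k d = 1` with `1 ≤ k ≤ d`,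
then `ugcd (k * (n/d)) n = n / d`. -/
lemma ugcd_mul {n d k : ℕ} (hn : 0 < n) (hd : d ∣ n) (hud : Nat.gcd d (n / d) = 1)
    (hk1 : 1 ≤ k) (hkd : k ≤ d) (hu : ugcd k d = 1) : ugcd (k * (n / d)) n = n / d := by
  set e := n / d with he
  set j := k * e with hj
  have hdpos : 0 < d := hk1.trans hkd
  have hde : d * e = n := Nat.mul_div_cancel' hd
  have hepos : 0 < e := by
    rcases Nat.eq_zero_or_pos e with h | h
    · rw [h, Nat.mul_zero] at hde; omega
    · exact h
  have hedvd : e ∣ n := Nat.div_dvd_of_dvd hd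
  have hne : n / e = d := by rw [he, Nat.div_div_self hd hn.ne']
  have hce : Nat.gcd e (n / e) = 1 := by
    rw [hne]; exact Nat.coprime_comm.mp hud
  have hle : e ≤ ugcd j n := le_ugcd hn (dvd_mul_left e k) hedvd hce
  obtain ⟨hfj, hfn, hff⟩ := ugcd_spec (j := j) (n := n) hn
  set f := ugcd j n with hfdef
  set g := Nat.gcd f d with hg
  set h := Nat.gcd f e with hh
  have hcde : Nat.Coprime d e := hud
  have hgh : g * h = f :=
    (Nat.gcd_mul_gcd_eq_iff_dvd_mul_of_coprime hcde).mpr (by rw [hde]; exact hfn)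
  have hgdvd_d : g ∣ d := Nat.gcd_dvd_right f d
  have hhdvd_e : h ∣ e := Nat.gcd_dvd_right f e
  have hcge : Nat.Coprime g e := Nat.Coprime.coprime_dvd_left hgdvd_d hcde
  have hgk : g ∣ k := by
    have : g ∣ k * e := (Nat.gcd_dvd_left f d).trans hfj
    exact hcge.dvd_of_dvd_mul_right this
  have hnf : n / f = d / g * (e / h) := by
    rw [← hde, ← hgh]
    exact (Nat.div_mul_div_comm hgdvd_d hhdvd_e).symm
  have hgdg : Nat.gcd g (d / g) = 1 := by
    have h1 : Nat.gcd g (d / g) ∣ Nat.gcd f (n / f) := by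
      refine Nat.dvd_gcd ((Nat.gcd_dvd_left g (d / g)).trans ((Nat.gcd_dvd_left f d))) ?_
      refine (Nat.gcd_dvd_right g (d / g)).trans ?_
      rw [hnf]; exact Dvd.intro _ rfl
    rw [hff] at h1
    exact Nat.dvd_one.mp h1
  have hg1 : g = 1 := by
    have hle1 : g ≤ 1 := hu ▸ le_ugcd hdpos hgk hgdvd_d hgdg
    have hpos : 0 < g := Nat.gcd_pos_of_pos_right f hdpos
    omega
  have hfe : f ∣ e := by
    have : f = h := by rw [← hgh, hg1, one_mul]
    rw [this]; exact hhdvd_e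
  exact le_antisymm (Nat.le_of_dvd hepos hfe) hle

lemma ugcd_decomp {n j : ℕ} (hn : 0 < n) (hj1 : 1 ≤ j) (hjn : j ≤ n) :
    let e := ugcd j n
    (n / e) ∣ n ∧ Nat.gcd (n / e) (n / (n / e)) = 1 ∧ 1 ≤ j / e ∧ j / e ≤ n / e ∧
      ugcd (j / e) (n / e) = 1 ∧ j / e * (n / (n / e)) = j / e * e := by
  intro e
  obtain ⟨hej, hen, hue⟩ := ugcd_spec (j := j) (n := n) hn
  have hepos : 1 ≤ e := ugcd_pos hn
  have hnne : n / (n / e) = e := Nat.div_div_self hen hn.ne'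
  refine ⟨Nat.div_dvd_of_dvd hen, ?_, ?_, ?_, ?_, by rw [hnne]⟩
  · rw [hnne]; exact Nat.coprime_comm.mp hue
  · exact Nat.div_pos (Nat.le_of_dvd hj1 hej) hepos
  · exact Nat.div_le_div_right hjn
  · -- ugcd (j / e) (n / e) = 1
    set d := n / e with hd
    set k := j / e with hk
    have hdpos : 1 ≤ d := Nat.div_pos (Nat.le_of_dvd hn hen) hepos
    obtain ⟨hck, hcd, hcc⟩ := ugcd_spec (j := k) (n := d) hdpos
    set c := ugcd k d with hc
    have hcpos : 1 ≤ c := ugcd_pos hdpos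
    have hecj : e * c ∣ j := by
      obtain ⟨t, ht⟩ := hck
      refine ⟨t, ?_⟩
      rw [mul_assoc, ← ht, hk, Nat.mul_div_cancel' hej]
    have hecn : e * c ∣ n := by
      obtain ⟨t, ht⟩ := hcd
      refine ⟨t, ?_⟩
      rw [mul_assoc, ← ht, hd, Nat.mul_div_cancel' hen]
    have hecu : Nat.gcd (e * c) (n / (e * c)) = 1 := by
      have hdc : n / (e * c) = d / c := by
        rw [hd, Nat.div_div_eq_div_mul]
      rw [hdc]
      have h1 : Nat.Coprime e (d / c) :=
        Nat.Coprime.coprime_dvd_right (Nat.div_dvd_of_dvd hcd) hue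
      exact Nat.Coprime.mul h1 hcc
    have : e * c ≤ e := le_ugcd hn hecj hecn hecu
    have : c ≤ 1 := by
      by_contra hlt
      push_neg at hlt
      nlinarith
    omega

lemma root_eq {n d k : ℕ} (hn : 0 < n) (hd : d ∣ n) (hdpos : 0 < d) :
    Complex.exp (2 * Real.pi * Complex.I / d) ^ k =
      Complex.exp (2 * Real.pi * Complex.I / n) ^ (k * (n / d)) := by
  set e := n / d with he
  have hde : d * e = n := Nat.mul_div_cancel' hd
  have hepos : 0 < e := by
    rcases Nat.eq_zero_or_pos e with h | h
    · rw [h, Nat.mul_zero] at hde; omega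
    · exact h
  rw [← Complex.exp_nat_mul, ← Complex.exp_nat_mul]
  congr 1
  have hdc : (d : ℂ) ≠ 0 := Nat.cast_ne_zero.mpr hdpos.ne'
  have hec : (e : ℂ) ≠ 0 := Nat.cast_ne_zero.mpr hepos.ne'
  have hnc : (n : ℂ) = (d : ℂ) * e := by
    rw [← hde]; push_cast; ring
  rw [hnc]
  push_cast
  field_simp

theorem stmt4 (n : ℕ) (hn : 1 ≤ n) :
    (X ^ n - 1 : Polynomial ℂ) =
      ∏ d ∈ n.divisors.filter (fun d => Nat.gcd d (n / d) = 1), unitaryCyc d := by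
  have hn0 : 0 < n := hn
  set ζ := Complex.exp (2 * Real.pi * Complex.I / n) with hζdef
  have hζ : IsPrimitiveRoot ζ n := Complex.isPrimitiveRoot_exp n hn0.ne'
  -- Step 1 : X^n - 1 = ∏_{j ∈ range n} (X - C (ζ^j))
  have step1 : (X ^ n - 1 : Polynomial ℂ) = ∏ j ∈ Finset.range n, (X - C (ζ ^ j)) := by
    have hroots : Polynomial.nthRoots n (1 : ℂ) = (Multiset.range n).map (ζ ^ ·) := by
      have := hζ.nthRoots_eq (one_pow n)
      simpa using this
    have hmonic : ((X : Polynomial ℂ) ^ n - C 1).Monic := monic_X_pow_sub_C 1 hn0.ne'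
    have hcard : ((X : Polynomial ℂ) ^ n - C 1).roots.card =
        ((X : Polynomial ℂ) ^ n - C 1).natDegree := by
      have h1 : ((X : Polynomial ℂ) ^ n - C 1).roots = Polynomial.nthRoots n (1 : ℂ) := rfl
      rw [h1, hroots, Multiset.card_map, Multiset.card_range,
        natDegree_X_pow_sub_C]
    have hmain := prod_multiset_X_sub_C_of_monic_of_roots_card_eq hmonic hcard
    have h1 : ((X : Polynomial ℂ) ^ n - C 1).roots = Polynomial.nthRoots n (1 : ℂ) := rfl
    rw [h1, hroots] at hmain
    calc (X ^ n - 1 : Polynomial ℂ) = X ^ n - C 1 := by rw [map_one]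
      _ = (((Multiset.range n).map (ζ ^ ·)).map fun a => X - C a).prod := hmain.symm
      _ = ∏ j ∈ Finset.range n, (X - C (ζ ^ j)) := by
          rw [Multiset.map_map]
          rfl
  -- Step 2 : range n → Icc 1 n
  have step2 : (∏ j ∈ Finset.range n, (X - C (ζ ^ j))) =
      ∏ j ∈ Finset.Icc 1 n, (X - C (ζ ^ j)) := by
    refine Finset.prod_nbij' (fun m => if m = 0 then n else m) (fun j => j % n)
      ?_ ?_ ?_ ?_ ?_
    · intro m hm
      simp only [Finset.mem_range] at hm
      by_cases h : m = 0 <;> simp [h, Finset.mem_Icc] <;> omega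
    · intro j hj
      simp only [Finset.mem_Icc] at hj
      exact Finset.mem_range.mpr (Nat.mod_lt _ hn0)
    · intro m hm
      simp only [Finset.mem_range] at hm
      show (if m = 0 then n else m) % n = m
      by_cases h : m = 0
      · simp [h, Nat.mod_self]
      · simp [h, Nat.mod_eq_of_lt hm]
    · intro j hj
      simp only [Finset.mem_Icc] at hj
      show (if j % n = 0 then n else j % n) = j
      by_cases h : j = n
      · simp [h, Nat.mod_self]
      · have hlt : j < n := lt_of_le_of_ne hj.2 h
        rw [Nat.mod_eq_of_lt hlt]
        have : j ≠ 0 := by omega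
        simp [this]
    · intro m hm
      simp only [Finset.mem_range] at hm
      by_cases h : m = 0
      · simp [h, hζ.pow_eq_one]
      · simp [h]
  -- Step 3 : the partition by unitary divisors
  have step3 : (∏ j ∈ Finset.Icc 1 n, (X - C (ζ ^ j))) =
      ∏ d ∈ n.divisors.filter (fun d => Nat.gcd d (n / d) = 1), unitaryCyc d := by
    have hrw : ∀ d ∈ n.divisors.filter (fun d => Nat.gcd d (n / d) = 1),
        unitaryCyc d = ∏ k ∈ (Finset.Icc 1 d).filter (fun k => ugcd k d = 1),
          (X - C (ζ ^ (k * (n / d)))) := by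
      intro d hd
      simp only [Finset.mem_filter, Nat.mem_divisors] at hd
      obtain ⟨⟨hddvd, _⟩, _⟩ := hd
      have hdpos : 0 < d := Nat.pos_of_dvd_of_pos hddvd hn0
      unfold unitaryCyc
      refine Finset.prod_congr rfl fun k _ => ?_
      rw [root_eq hn0 hddvd hdpos]
    rw [Finset.prod_congr rfl hrw, Finset.prod_sigma']
    refine (Finset.prod_bij (fun p _ => p.2 * (n / p.1)) ?_ ?_ ?_ ?_).symm
    · -- maps into Icc 1 n
      rintro ⟨d, k⟩ hp
      simp only [Finset.mem_sigma, Finset.mem_filter, Nat.mem_divisors,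
        Finset.mem_Icc] at hp
      obtain ⟨⟨⟨hddvd, _⟩, _⟩, ⟨hk1, hkd⟩, _⟩ := hp
      have hdpos : 0 < d := Nat.pos_of_dvd_of_pos hddvd hn0
      have hepos : 0 < n / d := Nat.div_pos (Nat.le_of_dvd hn0 hddvd) hdpos
      refine Finset.mem_Icc.mpr ⟨Nat.mul_pos hk1 hepos, ?_⟩
      calc k * (n / d) ≤ d * (n / d) := Nat.mul_le_mul_right _ hkd
        _ = n := Nat.mul_div_cancel' hddvd
    · -- injective
      rintro ⟨d1, k1⟩ hp1 ⟨d2, k2⟩ hp2 heq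
      simp only [Finset.mem_sigma, Finset.mem_filter, Nat.mem_divisors,
        Finset.mem_Icc] at hp1 hp2
      obtain ⟨⟨⟨hd1, _⟩, hu1⟩, ⟨hk11, hk1d⟩, hug1⟩ := hp1
      obtain ⟨⟨⟨hd2, _⟩, hu2⟩, ⟨hk21, hk2d⟩, hug2⟩ := hp2
      have h1 := ugcd_mul hn0 hd1 hu1 hk11 hk1d hug1
      have h2 := ugcd_mul hn0 hd2 hu2 hk21 hk2d hug2
      simp only at heq
      have hee : n / d1 = n / d2 := by rw [← h1, ← h2, heq]
      have hdd : d1 = d2 := by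
        rw [← Nat.div_div_self hd1 hn0.ne', ← Nat.div_div_self hd2 hn0.ne', hee]
      subst hdd
      have hepos : 0 < n / d1 :=
        Nat.div_pos (Nat.le_of_dvd hn0 hd1) (Nat.pos_of_dvd_of_pos hd1 hn0)
      have : k1 = k2 := Nat.eq_of_mul_eq_mul_right hepos heq
      subst this
      rfl
    · -- surjective
      intro j hj
      simp only [Finset.mem_Icc] at hj
      obtain ⟨hj1, hjn⟩ := hj
      have := ugcd_decomp hn0 hj1 hjn
      set e := ugcd j n with hedef
      obtain ⟨hdvd, hcop, hk1, hkd, hug, _⟩ := this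
      obtain ⟨hej, _, _⟩ := ugcd_spec (j := j) (n := n) hn0
      refine ⟨⟨n / e, j / e⟩, ?_, ?_⟩
      · simp only [Finset.mem_sigma, Finset.mem_filter, Nat.mem_divisors, Finset.mem_Icc]
        exact ⟨⟨⟨hdvd, hn0.ne'⟩, hcop⟩, ⟨hk1, hkd⟩, hug⟩
      · simp only
        rw [Nat.div_div_self (ugcd_spec (j := j) (n := n) hn0).2.1 hn0.ne',
          Nat.div_mul_cancel hej]
    · -- values agree
      rintro ⟨d, k⟩ hp
      rfl
  rw [step1, step2, step3]
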